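/- Let F be a field. Let H11 and H12 be matrices with the same number of rows such that rank([H11 H12]) = k, rank(H12) = c, and let M2 be a matrix with rank(H12·M2) = l. Then rank([H11 H12·M2]) ≥ k − c + l. -/

import Mathlib

open Matrix Module

/-
Let `R₁`, `R₂`, `R₃ ≤ R₂` be the column spaces of `H₁₁`, `H₁₂`, `H₁₂·M₂`; the column spaces of
`[H₁₁ H₁₂]` and `[H₁₁ H₁₂·M₂]` are `R₁ ⊔ R₂` and `R₁ ⊔ R₃`. Since `R₃ ⊆ (R₁ ⊔ R₃) ⊓ R₂`, Grassmann's formula applied to `R₁ ⊔ R₃` and `R₂` gives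
`dim (R₁ ⊔ R₂) + dim R₃ ≤ dim (R₁ ⊔ R₃) + dim R₂`, i.e. `k + l ≤ rank [H₁₁ H₁₂·M₂] + c`.
-/

theorem Submodule.finrank_sup_add_finrank_le_of_le {K V : Type*} [DivisionRing K]
    [AddCommGroup V] [Module K V] [FiniteDimensional K V] (s t u : Submodule K V) (hut : u ≤ t) :
    finrank K ↥(s ⊔ t) + finrank K u ≤ finrank K ↥(s ⊔ u) + finrank K t := by
  have grassmann := finrank_sup_add_finrank_inf_eq (s ⊔ u) t
  rw [sup_assoc, sup_eq_right.mpr hut] at grassmann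
  have hu : finrank K u ≤ finrank K ↥((s ⊔ u) ⊓ t) :=
    Submodule.finrank_mono (le_inf le_sup_right hut)
  omega

namespace Matrix

variable {R : Type*} [CommSemiring R] {m n n₁ n₂ p : Type*} [Fintype n₁] [Fintype n₂]

theorem range_mulVecLin_fromCols (A : Matrix m n₁ R) (B : Matrix m n₂ R) :
    LinearMap.range (fromCols A B).mulVecLin =
      LinearMap.range A.mulVecLin ⊔ LinearMap.range B.mulVecLin := by
  rw [range_mulVecLin, range_mulVecLin, range_mulVecLin, ← Submodule.span_union,
    ← Set.Sum.elim_range]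
  congr 2
  ext (j | j) <;> rfl

theorem range_mulVecLin_mul_le [Fintype n] [Fintype p] (A : Matrix m n R) (B : Matrix n p R) :
    LinearMap.range (A * B).mulVecLin ≤ LinearMap.range A.mulVecLin := by
  rw [mulVecLin_mul]
  exact LinearMap.range_comp_le_range _ _

theorem rank_le_rank_fromCols_right [Fintype m] {K : Type*} [Field K]
    (A : Matrix m n₁ K) (B : Matrix m n₂ K) : B.rank ≤ (fromCols A B).rank := by
  rw [rank, rank, range_mulVecLin_fromCols]
  exact Submodule.finrank_mono le_sup_right

theorem rank_fromCols_add_rank_le [Fintype m] {K : Type*} [Field K] {n₃ : Type*} [Fintype n₃]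
    (A : Matrix m n₁ K) (B : Matrix m n₂ K) (C : Matrix m n₃ K)
    (hCB : LinearMap.range C.mulVecLin ≤ LinearMap.range B.mulVecLin) :
    (fromCols A B).rank + C.rank ≤ (fromCols A C).rank + B.rank := by
  rw [rank, rank, rank, rank, range_mulVecLin_fromCols, range_mulVecLin_fromCols]
  exact Submodule.finrank_sup_add_finrank_le_of_le _ _ _ hCB

end Matrix

/-- If `rank [H11 H12] = k`, `rank H12 = c`, and `rank (H12·M2) = l`, then
`rank [H11 H12·M2] ≥ k - c + l`. -/
theorem stmt_8 {F : Type*} [Field F] {m n1 n2 p k c l : ℕ}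
    (H11 : Matrix (Fin m) (Fin n1) F) (H12 : Matrix (Fin m) (Fin n2) F)
    (M2 : Matrix (Fin n2) (Fin p) F)
    (hk : (Matrix.fromCols H11 H12).rank = k)
    (hc : H12.rank = c)
    (hl : (H12 * M2).rank = l) :
    (Matrix.fromCols H11 (H12 * M2)).rank ≥ k - c + l := by
  have hck : c ≤ k := hc ▸ hk ▸ rank_le_rank_fromCols_right H11 H12
  have key := rank_fromCols_add_rank_le H11 H12 (H12 * M2) (range_mulVecLin_mul_le H12 M2)
  omega
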